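/- arXiv:1602.06817 — 6 statements merged into one kernel-verified Lean document; each statement's English description precedes it below -/
import Mathlib

section
/- Let G be a bull-free graph and let C be an induced 5-cycle in G with vertices c1,...,c5 (indices mod 5). Then every vertex outside C with exactly three neighbors on C is adjacent to c_i, c_{i+1}, c_{i+2} for some i (i.e., its three neighbors on C are consecutive on the cycle). -/
open SimpleGraph

variable {V : Type*}

/-- The vertices `a b c d e` induce a bull in `G` (edges ab, bc, cd, be, ce). -/
def IsBull (G : SimpleGraph V) (a b c d e : V) : Prop :=
  a ≠ b ∧ a ≠ c ∧ a ≠ d ∧ a ≠ e ∧ b ≠ c ∧ b ≠ d ∧ b ≠ e ∧ c ≠ d ∧ c ≠ e ∧ d ≠ e ∧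
  G.Adj a b ∧ G.Adj b c ∧ G.Adj c d ∧ G.Adj b e ∧ G.Adj c e ∧
  ¬ G.Adj a c ∧ ¬ G.Adj a d ∧ ¬ G.Adj a e ∧ ¬ G.Adj b d ∧ ¬ G.Adj d e

/-- `G` contains no induced bull. -/
def BullFree (G : SimpleGraph V) : Prop := ∀ a b c d e : V, ¬ IsBull G a b c d e

/-- `G` contains no induced path on six vertices. -/
def P6Free (G : SimpleGraph V) : Prop :=
  ¬ ∃ p : Fin 6 → V, Function.Injective p ∧
      ∀ i j : Fin 6, G.Adj (p i) (p j) ↔ (i.val + 1 = j.val ∨ j.val + 1 = i.val)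

/-- `c` lists the vertices of an induced 5-cycle in `G` (indices mod 5). -/
def IsInducedC5 (G : SimpleGraph V) (c : Fin 5 → V) : Prop :=
  Function.Injective c ∧ ∀ i j : Fin 5, G.Adj (c i) (c j) ↔ (j = i + 1 ∨ i = j + 1)

/-- `S` is a homogeneous set in `G`. -/
def IsHomogeneous (G : SimpleGraph V) (S : Set V) : Prop :=
  ∀ v ∉ S, (∀ s ∈ S, G.Adj v s) ∨ (∀ s ∈ S, ¬ G.Adj v s)

/-- `S` is a proper homogeneous set: homogeneous, of size at least two, not all of `V`. -/
def IsProperHomogeneous (G : SimpleGraph V) (S : Set V) : Prop :=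
  IsHomogeneous G S ∧ (∃ a ∈ S, ∃ b ∈ S, a ≠ b) ∧ S ≠ Set.univ

/-- A graph is prime if it has no proper homogeneous set. -/
def IsPrimeGraph (G : SimpleGraph V) : Prop := ¬ ∃ S : Set V, IsProperHomogeneous G S

/-- Number of neighbors of `x` on the 5-cycle `c`. -/
def nbrCount (G : SimpleGraph V) [DecidableRel G.Adj] (c : Fin 5 → V) (x : V) : ℕ :=
  (Finset.univ.filter fun i : Fin 5 => G.Adj x (c i)).card

lemma bullCase (G : SimpleGraph V) (hB : BullFree G)
    (c : Fin 5 → V) (hc : IsInducedC5 G c)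
    (x : V) (hx : ∀ j, x ≠ c j) (i : Fin 5)
    (h1 : G.Adj x (c i)) (h2 : G.Adj x (c (i + 1)))
    (h3 : ¬ G.Adj x (c (i + 2))) (h4 : ¬ G.Adj x (c (i + 4))) : False := by
  obtain ⟨hinj, hadj⟩ := hc
  have ne : ∀ j k : Fin 5, j ≠ k → c j ≠ c k := fun j k h hh => h (hinj hh)
  have d1 : ∀ i : Fin 5, i = (i+4)+1 := by decide
  have d2 : ∀ i : Fin 5, i+2 = (i+1)+1 := by decide
  have d3 : ∀ i : Fin 5, ¬(i+1 = (i+4)+1 ∨ i+4 = (i+1)+1) := by decide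
  have d4 : ∀ i : Fin 5, ¬(i+2 = (i+4)+1 ∨ i+4 = (i+2)+1) := by decide
  have d5 : ∀ i : Fin 5, ¬(i+2 = i+1 ∨ i = (i+2)+1) := by decide
  have d6 : ∀ i : Fin 5, i+4 ≠ i ∧ i+4 ≠ i+1 ∧ i+4 ≠ i+2 ∧ i ≠ i+1 ∧ i ≠ i+2 ∧ i+1 ≠ i+2 := by
    decide
  obtain ⟨e1, e2, e3, e4, e5, e6⟩ := d6 i
  exact hB (c (i + 4)) (c i) (c (i + 1)) (c (i + 2)) x
    ⟨ne _ _ e1, ne _ _ e2, ne _ _ e3, fun h => hx _ h.symm,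
     ne _ _ e4, ne _ _ e5, fun h => hx _ h.symm,
     ne _ _ e6, fun h => hx _ h.symm, fun h => hx _ h.symm,
     (hadj _ _).2 (Or.inl (d1 i)), (hadj _ _).2 (Or.inl rfl), (hadj _ _).2 (Or.inl (d2 i)),
     h1.symm, h2.symm,
     fun h => d3 i ((hadj _ _).1 h), fun h => d4 i ((hadj _ _).1 h),
     fun h => h4 h.symm, fun h => d5 i ((hadj _ _).1 h), fun h => h3 h.symm⟩

theorem stmt1 (G : SimpleGraph V) [DecidableRel G.Adj] (hB : BullFree G)
    (c : Fin 5 → V) (hc : IsInducedC5 G c)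
    (x : V) (hx : x ∉ Set.range c) (h3 : nbrCount G c x = 3) :
    ∃ i : Fin 5, G.Adj x (c i) ∧ G.Adj x (c (i + 1)) ∧ G.Adj x (c (i + 2)) := by
  have hx' : ∀ j, x ≠ c j := fun j h => hx ⟨j, h.symm⟩
  rw [nbrCount, Finset.card_filter, Fin.sum_univ_five] at h3
  by_cases a0 : G.Adj x (c 0) <;> by_cases a1 : G.Adj x (c 1) <;>
    by_cases a2 : G.Adj x (c 2) <;> by_cases a3 : G.Adj x (c 3) <;>
    by_cases a4 : G.Adj x (c 4) <;>
    simp only [a0, a1, a2, a3, a4, if_true, if_false, if_pos, if_neg, not_false_iff] at h3 <;>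
    first
      | omega
      | exact ⟨0, a0, a1, a2⟩
      | exact ⟨1, a1, a2, a3⟩
      | exact ⟨2, a2, a3, a4⟩
      | exact ⟨3, a3, a4, a0⟩
      | exact ⟨4, a4, a0, a1⟩
      | exact (bullCase G hB c hc x hx' 0 a0 a1 a2 a4).elim
      | exact (bullCase G hB c hc x hx' 1 a1 a2 a3 a0).elim
      | exact (bullCase G hB c hc x hx' 2 a2 a3 a4 a1).elim
      | exact (bullCase G hB c hc x hx' 3 a3 a4 a0 a2).elim
      | exact (bullCase G hB c hc x hx' 4 a4 a0 a1 a3).elim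
end

section
/- Let G be a bull-free graph and let C be an induced 5-cycle in G. If u is a vertex adjacent to all five vertices of C and x is a vertex outside C with exactly one or exactly two neighbors on C, then u is adjacent to x. -/
open SimpleGraph

variable {V : Type*}

theorem stmt2 (G : SimpleGraph V) [DecidableRel G.Adj] (hB : BullFree G)
    (c : Fin 5 → V) (hc : IsInducedC5 G c)
    (u : V) (hu : ∀ i : Fin 5, G.Adj u (c i))
    (x : V) (hx : x ∉ Set.range c) (hk : nbrCount G c x = 1 ∨ nbrCount G c x = 2) :
    G.Adj u x := by
  by_contra hux
  -- x ≠ u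
  have hxu : x ≠ u := by
    rintro rfl
    have h5 : nbrCount G c x = 5 := by
      unfold nbrCount
      rw [Finset.filter_true_of_mem (fun i _ => hu i)]
      simp
    omega
  -- find j with x ~ c j, x ≁ c (j+1), x ≁ c (j+3)
  have key : ∀ f : Fin 5 → Bool,
      ((Finset.univ.filter fun i => f i = true).card = 1 ∨
       (Finset.univ.filter fun i => f i = true).card = 2) →
      ∃ j : Fin 5, f j = true ∧ f (j + 1) = false ∧ f (j + 3) = false := by decide
  obtain ⟨j, hj1, hj2, hj3⟩ := key (fun i => decide (G.Adj x (c i))) (by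
    have : (Finset.univ.filter fun i : Fin 5 => decide (G.Adj x (c i)) = true)
        = (Finset.univ.filter fun i : Fin 5 => G.Adj x (c i)) := by
      apply Finset.filter_congr; intro i _; simp
    rw [this]; exact hk)
  simp only [decide_eq_true_eq, decide_eq_false_iff_not] at hj1 hj2 hj3
  have hcinj := hc.1
  have hadj := hc.2
  have hne : ∀ i : Fin 5, x ≠ c i := fun i h => hx ⟨i, h.symm⟩
  exact hB x (c j) u (c (j + 3)) (c (j + 1))
    ⟨hne j, hxu, hne (j + 3), hne (j + 1),
     fun h => (hu j).ne h.symm,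
     fun h => (by decide : ∀ j : Fin 5, ¬ j = j + 3) j (hcinj h),
     fun h => (by decide : ∀ j : Fin 5, ¬ j = j + 1) j (hcinj h),
     (hu (j + 3)).ne, (hu (j + 1)).ne,
     fun h => (by decide : ∀ j : Fin 5, ¬ j + 3 = j + 1) j (hcinj h),
     hj1, (hu j).symm, hu (j + 3),
     (hadj j (j + 1)).mpr (Or.inl rfl),
     hu (j + 1),
     fun h => hux h.symm,
     hj3, hj2,
     fun h => (by decide : ∀ j : Fin 5, ¬ (j + 3 = j + 1 ∨ j = j + 3 + 1)) j ((hadj j (j + 3)).mp h),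
     fun h => (by decide : ∀ j : Fin 5, ¬ (j + 1 = j + 3 + 1 ∨ j + 3 = j + 1 + 1)) j
       ((hadj (j + 3) (j + 1)).mp h)⟩
end

section
/- Let G be a bull-free graph. If G contains an induced umbrella (a 5-wheel together with a vertex adjacent only to the center of the wheel), then G has a proper homogeneous set; moreover such a proper homogeneous set can be chosen to contain the vertices of the 5-cycle of the umbrella. -/
open SimpleGraph

variable {V : Type*}

lemma bull_contra {G : SimpleGraph V} (hB : BullFree G) {a b c d e : V}
    (hab : G.Adj a b) (hbc : G.Adj b c) (hcd : G.Adj c d) (hbe : G.Adj b e) (hce : G.Adj c e)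
    (hac : ¬ G.Adj a c) (had : ¬ G.Adj a d) (hae : ¬ G.Adj a e) (hbd : ¬ G.Adj b d)
    (hde : ¬ G.Adj d e) : False := by
  refine hB a b c d e ⟨hab.ne, ?_, ?_, ?_, hbc.ne, ?_, hbe.ne, hcd.ne, hce.ne, ?_,
    hab, hbc, hcd, hbe, hce, hac, had, hae, hbd, hde⟩
  · rintro rfl; exact had hcd
  · rintro rfl; exact hac hcd.symm
  · rintro rfl; exact hac hce.symm
  · rintro rfl; exact hde hbe
  · rintro rfl; exact hbd hbe

lemma fin5A : ∀ f : Fin 5 → Bool, (∃ i, f i = true) → (∃ j, f j = false) →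
    ∃ i, f i = true ∧ f (i+1) = false := by decide

lemma fin5B : ∀ f : Fin 5 → Bool, (∃ i, f i = true) → (∃ j, f j = false) →
    ∃ i, f i = true ∧ f (i+2) = false := by decide

lemma fin5C : ∀ f : Fin 5 → Bool, (∀ i, f i = true → f (i+1) = true → f (i+2) = true) →
    (∃ i, f i = true) → (∃ j, f j = false) →
    ∃ i, f i = true ∧ f (i+1) = false ∧ f (i+3) = false := by decide

lemma fin5D : ∀ f : Fin 5 → Bool, (∃ i, f i = true) → (∃ j, f j = false) →
    (∃ i, f i = true ∧ f (i+1) = false ∧ f (i+3) = false) ∨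
    (∃ i, f i = true ∧ f (i+1) = true ∧ f (i+2) = false) := by decide

section Umbrella

variable {G : SimpleGraph V} {c : Fin 5 → V} {u t : V}

/-- adjacent consecutive cycle vertices -/
lemma cadj (hc : IsInducedC5 G c) (i : Fin 5) : G.Adj (c i) (c (i+1)) := (hc.2 i (i+1)).mpr (Or.inl rfl)

/-- non-adjacency on the cycle from index conditions -/
lemma cnadj (hc : IsInducedC5 G c) (i j : Fin 5) (h1 : j ≠ i + 1) (h2 : i ≠ j + 1) : ¬ G.Adj (c i) (c j) := by
  intro h
  rcases (hc.2 i j).mp h with h' | h'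
  · exact h1 h'
  · exact h2 h'

lemma nsymm {x y : V} (h : ¬ G.Adj x y) : ¬ G.Adj y x := fun h' => h h'.symm

/-- mixed vertices are adjacent to the hub -/
lemma S1 (hB : BullFree G) (hc : IsInducedC5 G c)
    (hu : ∀ i : Fin 5, G.Adj u (c i)) (hut : G.Adj u t)
    (ht : ∀ i : Fin 5, ¬ G.Adj t (c i)) {p : V} (h1 : ∃ i, G.Adj p (c i)) (h0 : ∃ j, ¬ G.Adj p (c j)) : G.Adj u p := by
  classical
  by_contra hup
  set f : Fin 5 → Bool := fun i => decide (G.Adj p (c i)) with hf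
  have hfT : ∀ i, f i = true → G.Adj p (c i) := fun i h => of_decide_eq_true h
  have hfF : ∀ i, f i = false → ¬ G.Adj p (c i) := fun i h => of_decide_eq_false h
  have hex1 : ∃ i, f i = true := h1.imp fun i h => decide_eq_true h
  have hex0 : ∃ j, f j = false := h0.imp fun j h => decide_eq_false h
  by_cases htp : G.Adj t p
  · -- closure property, then sparse index
    have hclose : ∀ i, f i = true → f (i+1) = true → f (i+2) = true := by
      intro i hi hi1
      by_contra h2
      have e2 : i + 1 + 1 = i + 2 := (by decide : ∀ x : Fin 5, x + 1 + 1 = x + 2) i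
      have hcd' : G.Adj (c (i+1)) (c (i+2)) := by have := cadj hc (i+1); rwa [e2] at this
      exact bull_contra hB htp (hfT _ hi1) hcd' (hfT _ hi) (cadj hc i).symm
        (ht (i+1)) (ht (i+2)) (ht i) (hfF _ (by simpa using h2))
        (nsymm (cnadj hc i (i+2)
          ((by decide : ∀ x : Fin 5, x + 2 ≠ x + 1) i)
          ((by decide : ∀ x : Fin 5, x ≠ x + 2 + 1) i)))
    obtain ⟨α, hα, hα1, hα3⟩ := fin5C f hclose hex1 hex0
    exact bull_contra hB (hfT _ hα) (hu α).symm (hu (α+3)) (cadj hc α) (hu (α+1))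
      (nsymm hup) (hfF _ hα3) (hfF _ hα1)
      (cnadj hc α (α+3) ((by decide : ∀ x : Fin 5, x + 3 ≠ x + 1) α)
        ((by decide : ∀ x : Fin 5, x ≠ x + 3 + 1) α))
      (cnadj hc (α+3) (α+1) ((by decide : ∀ x : Fin 5, x + 1 ≠ x + 3 + 1) α)
        ((by decide : ∀ x : Fin 5, x + 3 ≠ x + 1 + 1) α))
  · obtain ⟨i, hi, hi1⟩ := fin5A f hex1 hex0
    exact bull_contra hB (hfT _ hi) (hu i).symm hut (cadj hc i) (hu (i+1))
      (nsymm hup) (nsymm htp) (hfF _ hi1) (nsymm (ht i)) (ht (i+1))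

/-- anti vertices not adjacent to hub repel mixed vertices -/
lemma S2 (hB : BullFree G) (hc : IsInducedC5 G c)
    (hu : ∀ i : Fin 5, G.Adj u (c i)) (hut : G.Adj u t)
    (ht : ∀ i : Fin 5, ¬ G.Adj t (c i)) {z p : V} (hz : ∀ i, ¬ G.Adj z (c i)) (huz : ¬ G.Adj u z)
    (h1 : ∃ i, G.Adj p (c i)) (h0 : ∃ j, ¬ G.Adj p (c j)) : ¬ G.Adj z p := by
  classical
  intro hzp
  set f : Fin 5 → Bool := fun i => decide (G.Adj p (c i)) with hf
  have hfT : ∀ i, f i = true → G.Adj p (c i) := fun i h => of_decide_eq_true h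
  have hfF : ∀ i, f i = false → ¬ G.Adj p (c i) := fun i h => of_decide_eq_false h
  obtain ⟨i, hi, hi2⟩ := fin5B f (h1.imp fun i h => decide_eq_true h)
    (h0.imp fun j h => decide_eq_false h)
  have hup : G.Adj u p := S1 hB hc hu hut ht h1 h0
  exact bull_contra hB hzp hup.symm (hu (i+2)) (hfT _ hi) (hu i)
    (nsymm huz) (hz (i+2)) (hz i) (hfF _ hi2)
    (cnadj hc (i+2) i ((by decide : ∀ x : Fin 5, x ≠ x + 2 + 1) i)
      ((by decide : ∀ x : Fin 5, x + 2 ≠ x + 1) i))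

/-- complete vertices not adjacent to hub attract mixed vertices -/
lemma S3 (hB : BullFree G) (hc : IsInducedC5 G c)
    (hu : ∀ i : Fin 5, G.Adj u (c i)) (hut : G.Adj u t)
    (ht : ∀ i : Fin 5, ¬ G.Adj t (c i)) {y p : V} (hy : ∀ i, G.Adj y (c i)) (huy : ¬ G.Adj u y)
    (h1 : ∃ i, G.Adj p (c i)) (h0 : ∃ j, ¬ G.Adj p (c j)) : G.Adj y p := by
  classical
  by_contra hyp
  set f : Fin 5 → Bool := fun i => decide (G.Adj p (c i)) with hf
  have hfT : ∀ i, f i = true → G.Adj p (c i) := fun i h => of_decide_eq_true h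
  have hfF : ∀ i, f i = false → ¬ G.Adj p (c i) := fun i h => of_decide_eq_false h
  have hex1 : ∃ i, f i = true := h1.imp fun i h => decide_eq_true h
  have hex0 : ∃ j, f j = false := h0.imp fun j h => decide_eq_false h
  by_cases htp : G.Adj t p
  · rcases fin5D f hex1 hex0 with ⟨α, hα, hα1, hα3⟩ | ⟨i, hi, hi1, hi2⟩
    · -- sparse bull (c(α+3), y, cα, p, c(α+1))
      exact bull_contra hB (hy (α+3)).symm (hy α) (hfT _ hα).symm (hy (α+1)) (cadj hc α)
        (cnadj hc (α+3) α ((by decide : ∀ x : Fin 5, x ≠ x + 3 + 1) α)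
          ((by decide : ∀ x : Fin 5, x + 3 ≠ x + 1) α))
        (nsymm (hfF _ hα3)) (cnadj hc (α+3) (α+1)
          ((by decide : ∀ x : Fin 5, x + 1 ≠ x + 3 + 1) α)
          ((by decide : ∀ x : Fin 5, x + 3 ≠ x + 1 + 1) α))
        hyp (hfF _ hα1)
    · -- L3 bull (t, p, c(i+1), c(i+2), c i)
      have e2 : i + 1 + 1 = i + 2 := (by decide : ∀ x : Fin 5, x + 1 + 1 = x + 2) i
      have hcd' : G.Adj (c (i+1)) (c (i+2)) := by have := cadj hc (i+1); rwa [e2] at this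
      exact bull_contra hB htp (hfT _ hi1) hcd' (hfT _ hi) (cadj hc i).symm
        (ht (i+1)) (ht (i+2)) (ht i) (hfF _ hi2)
        (nsymm (cnadj hc i (i+2) ((by decide : ∀ x : Fin 5, x + 2 ≠ x + 1) i)
          ((by decide : ∀ x : Fin 5, x ≠ x + 2 + 1) i)))
  · by_cases hty : G.Adj t y
    · obtain ⟨α, hα, hα1⟩ := fin5A f hex1 hex0
      exact bull_contra hB hty (hy α) (hfT _ hα).symm (hy (α+1)) (cadj hc α)
        (ht α) htp (ht (α+1)) hyp (hfF _ hα1)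
    · obtain ⟨α, hα⟩ := hex1
      exact bull_contra hB hut.symm (hu α) (hy α).symm (S1 hB hc hu hut ht h1 h0) (hfT _ hα).symm
        (ht α) hty htp huy hyp





def umbChain (G : SimpleGraph V) (u : V) (W : Set V) : ℕ → Set V
  | 0 => W
  | n + 1 => umbChain G u W n ∪
      {v | G.Adj u v ∧ (∃ a ∈ umbChain G u W n, G.Adj v a) ∧ ∃ b ∈ umbChain G u W n, ¬ G.Adj v b}

lemma umbChain_zero (G : SimpleGraph V) (u : V) (W : Set V) : umbChain G u W 0 = W := rfl

lemma umbChain_succ (G : SimpleGraph V) (u : V) (W : Set V) (n : ℕ) :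
    umbChain G u W (n+1) = umbChain G u W n ∪
      {v | G.Adj u v ∧ (∃ a ∈ umbChain G u W n, G.Adj v a) ∧ ∃ b ∈ umbChain G u W n, ¬ G.Adj v b} := rfl

lemma umbChain_adj_u {G : SimpleGraph V} {u : V} {W : Set V}
    (hW : ∀ x ∈ W, G.Adj u x) : ∀ n, ∀ x ∈ umbChain G u W n, G.Adj u x := by
  intro n
  induction n with
  | zero => exact hW
  | succ n ih =>
    intro x hx
    rcases hx with hx | hx
    · exact ih x hx
    · exact hx.1

/-- minimal level at which some element of the chain satisfies Q -/
lemma minlevel {C : ℕ → Set V} {Q : V → Prop} {k₀ : ℕ} {x₀ : V}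
    (h0 : x₀ ∈ C k₀) (hq : Q x₀) :
    ∃ m, m ≤ k₀ ∧ (∃ x, x ∈ C m ∧ Q x) ∧ ∀ k, k < m → ∀ y ∈ C k, ¬ Q y := by
  classical
  have hex : ∃ k, ∃ x, x ∈ C k ∧ Q x := ⟨k₀, x₀, h0, hq⟩
  refine ⟨Nat.find hex, Nat.find_min' hex ⟨x₀, h0, hq⟩, Nat.find_spec hex, ?_⟩
  intro k hk y hy hQy
  exact Nat.find_min hex hk ⟨y, hy, hQy⟩


lemma notW_anti (hc : IsInducedC5 G c) {x : V} (hx : x ∈ Set.range c)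
    (ha : ∀ i, ¬ G.Adj x (c i)) : False := by
  obtain ⟨i, rfl⟩ := hx
  exact ha (i+1) (cadj hc i)

lemma notW_comp (hc : IsInducedC5 G c) {x : V} (hx : x ∈ Set.range c)
    (ha : ∀ i, G.Adj x (c i)) : False := by
  obtain ⟨i, rfl⟩ := hx
  exact cnadj hc i (i+2) ((by decide : ∀ x : Fin 5, x + 2 ≠ x + 1) i)
    ((by decide : ∀ x : Fin 5, x ≠ x + 2 + 1) i) (ha (i+2))

lemma trichotomyW {G : SimpleGraph V} (c : Fin 5 → V) (x : V) :
    (∀ i, G.Adj x (c i)) ∨ (∀ i, ¬ G.Adj x (c i)) ∨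
      ((∃ i, G.Adj x (c i)) ∧ ∃ j, ¬ G.Adj x (c j)) := by
  classical
  by_cases h1 : ∀ i, G.Adj x (c i)
  · exact Or.inl h1
  · by_cases h2 : ∀ i, ¬ G.Adj x (c i)
    · exact Or.inr (Or.inl h2)
    · push_neg at h1 h2
      obtain ⟨j, hj⟩ := h1
      obtain ⟨i, hi⟩ := h2
      exact Or.inr (Or.inr ⟨⟨i, hi⟩, j, hj⟩)

/-- Claim A: anti vertices not adjacent to the hub are anticomplete to the chain. -/
lemma claimA (hB : BullFree G) (hc : IsInducedC5 G c)
    (hu : ∀ i : Fin 5, G.Adj u (c i)) (hut : G.Adj u t)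
    (ht : ∀ i : Fin 5, ¬ G.Adj t (c i))
    {z : V} (hz : ∀ i, ¬ G.Adj z (c i)) (huz : ¬ G.Adj u z) :
    ∀ n, ∀ m ≤ n, ∀ s ∈ umbChain G u (Set.range c) m, ¬ G.Adj z s := by
  classical
  have hWu : ∀ x ∈ Set.range c, G.Adj u x := by rintro x ⟨i, rfl⟩; exact hu i
  have hadjU : ∀ k, ∀ x ∈ umbChain G u (Set.range c) k, G.Adj u x := umbChain_adj_u hWu
  intro n
  induction n with
  | zero =>
    intro m hm s hs
    interval_cases m
    obtain ⟨i, rfl⟩ := hs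
    exact hz i
  | succ n ih =>
    intro m hm s hs
    rcases Nat.lt_succ_iff_lt_or_eq.mp (Nat.lt_succ_of_le hm) with h | rfl
    · exact ih m (Nat.lt_succ_iff.mp h) s hs
    · rcases hs with hs | ⟨hsu, ⟨a, haC, hsa⟩, ⟨b, hbC, hsb⟩⟩
      · exact ih n le_rfl s hs
      intro hzs
      rcases trichotomyW c s with hsc | hsa' | ⟨hm1, hm0⟩
      · -- s complete : minimal-level non-neighbor b₁
        obtain ⟨ν, hνle, ⟨b₁, hb₁C, hsb₁⟩, hminν⟩ :=
          minlevel (C := umbChain G u (Set.range c)) (Q := fun x => ¬ G.Adj s x) hbC hsb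
        match ν, hνle, hminν with
        | 0, _, _ => obtain ⟨i, rfl⟩ := hb₁C; exact hsb₁ (hsc i)
        | (ν'+1), hνle, hminν =>
        rcases hb₁C with hb₁C' | ⟨hub₁, _, ⟨b₂, hb₂C, hb₁b₂⟩⟩
        · exact hminν ν' (Nat.lt_succ_self _) b₁ hb₁C' hsb₁
        · have hsb₂ : G.Adj s b₂ := not_not.mp (hminν ν' (Nat.lt_succ_self _) b₂ hb₂C)
          have hzb₁ : ¬ G.Adj z b₁ := ih (ν'+1) hνle b₁ (Or.inr ⟨hub₁, ‹_›, ⟨b₂, hb₂C, hb₁b₂⟩⟩)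
          have hzb₂ : ¬ G.Adj z b₂ := ih ν' (Nat.le_of_succ_le hνle) b₂ hb₂C
          exact bull_contra hB hzs hsu.symm hub₁ hsb₂ (hadjU _ _ hb₂C)
            (nsymm huz) hzb₁ hzb₂ hsb₁ hb₁b₂
      · -- s anti: minimal-level neighbor a₁
        obtain ⟨μ, hμle, ⟨a₁, ha₁C, hsa₁⟩, hminμ⟩ :=
          minlevel (C := umbChain G u (Set.range c)) (Q := fun x => G.Adj s x) haC hsa
        match μ, hμle, hminμ with
        | 0, _, _ => obtain ⟨i, rfl⟩ := ha₁C; exact hsa' i hsa₁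
        | (μ'+1), hμle, hminμ =>
        rcases ha₁C with ha₁C' | ⟨hua₁, _, ⟨w₂, hw₂C, ha₁w₂⟩⟩
        · exact hminμ μ' (Nat.lt_succ_self _) a₁ ha₁C' hsa₁
        · have hsw₂ : ¬ G.Adj s w₂ := hminμ μ' (Nat.lt_succ_self _) w₂ hw₂C
          have hza₁ : ¬ G.Adj z a₁ := ih (μ'+1) hμle a₁ (Or.inr ⟨hua₁, ‹_›, ⟨w₂, hw₂C, ha₁w₂⟩⟩)
          have hzw₂ : ¬ G.Adj z w₂ := ih μ' (Nat.le_of_succ_le hμle) w₂ hw₂C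
          exact bull_contra hB hzs hsu.symm (hadjU _ _ hw₂C) hsa₁ hua₁
            (nsymm huz) hzw₂ hza₁ hsw₂ (nsymm ha₁w₂)
      · exact S2 hB hc hu hut ht hz huz hm1 hm0 hzs

/-- Claim D: a complete vertex dominating all lower levels cannot miss an anti member. -/
lemma claimD (hB : BullFree G) (hc : IsInducedC5 G c) {u : V} :
    ∀ ρ : ℕ, ∀ e ∈ umbChain G u (Set.range c) ρ, (∀ i, ¬ G.Adj e (c i)) →
    ∀ d : V, (∀ i, G.Adj d (c i)) → ¬ G.Adj d e →
    (∀ k < ρ, ∀ x ∈ umbChain G u (Set.range c) k, G.Adj d x) → False := by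
  classical
  intro ρ e heC heA d hdC hde hdom
  -- e is new at ρ
  match ρ, heC, hdom with
  | 0, heC, _ => exact notW_anti hc heC heA
  | (ρ'+1), heC, hdom =>
  rcases heC with heC' | ⟨hue, ⟨w₀, hw₀C, hew₀⟩, _⟩
  · exact hde (hdom ρ' (Nat.lt_succ_self _) e heC')
  -- minimal level neighbor w of e
  obtain ⟨σ, hσle, ⟨w, hwC, hew⟩, hminσ⟩ :=
    minlevel (C := umbChain G u (Set.range c)) (Q := fun x => G.Adj e x) hw₀C hew₀
  have hσρ : σ < ρ'+1 := Nat.lt_succ_of_le hσle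
  have hdw : G.Adj d w := hdom σ hσρ w hwC
  rcases trichotomyW (G := G) c w with hwComp | hwAnti | ⟨⟨i1, hi1⟩, ⟨i0, hi0⟩⟩
  · -- w complete; x₂ := min level non-neighbor of w
    match σ, hσle, hwC, hminσ, hσρ with
    | 0, _, hwC, _, _ => exact notW_comp hc hwC hwComp
    | (σ'+1), hσle, hwC, hminσ, hσρ =>
    rcases hwC with hwC' | ⟨huw, _, ⟨x₀, hx₀C, hwx₀⟩⟩
    · exact hminσ σ' (Nat.lt_succ_self _) w hwC' hew
    obtain ⟨τ, hτle, ⟨x₂, hx₂C, hwx₂⟩, hminτ⟩ :=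
      minlevel (C := umbChain G u (Set.range c)) (Q := fun x => ¬ G.Adj w x) hx₀C hwx₀
    have hτσ : τ < σ'+1 := Nat.lt_succ_of_le hτle
    have hex₂ : ¬ G.Adj e x₂ := hminσ τ hτσ x₂ hx₂C
    have hdx₂ : G.Adj d x₂ := hdom τ (lt_trans hτσ hσρ) x₂ hx₂C
    by_cases hx₂Comp : ∀ i, G.Adj x₂ (c i)
    · -- x₂ complete; take its non-adjacency witness v₄ one level down
      match τ, hτle, hx₂C, hminτ, hτσ with
      | 0, _, hx₂C, _, _ => exact notW_comp hc hx₂C hx₂Comp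
      | (τ'+1), hτle, hx₂C, hminτ, hτσ =>
      rcases hx₂C with hx₂C' | ⟨hux₂, _, ⟨v₄, hv₄C, hx₂v₄⟩⟩
      · exact hminτ τ' (Nat.lt_succ_self _) x₂ hx₂C' hwx₂
      have hwv₄ : G.Adj w v₄ := not_not.mp (hminτ τ' (Nat.lt_succ_self _) v₄ hv₄C)
      have hdv₄ : G.Adj d v₄ :=
        hdom τ' (lt_trans (lt_trans (Nat.lt_succ_self _) hτσ) hσρ) v₄ hv₄C
      have hev₄ : ¬ G.Adj e v₄ := hminσ τ' (lt_trans (Nat.lt_succ_self _) hτσ) v₄ hv₄C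
      exact bull_contra hB hew hdw.symm hdx₂ hwv₄ hdv₄
        (nsymm hde) hex₂ hev₄ hwx₂ hx₂v₄
    · push_neg at hx₂Comp
      obtain ⟨i, hi⟩ := hx₂Comp
      exact bull_contra hB hew hdw.symm hdx₂ (hwComp i) (hdC i)
        (nsymm hde) hex₂ (heA i) hwx₂ hi
  · -- w anti; w₂ := min level neighbor of w
    match σ, hσle, hwC, hminσ, hσρ with
    | 0, _, hwC, _, _ => exact notW_anti hc hwC hwAnti
    | (σ'+1), hσle, hwC, hminσ, hσρ =>
    rcases hwC with hwC' | ⟨huw, ⟨a₀, ha₀C, hwa₀⟩, _⟩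
    · exact hminσ σ' (Nat.lt_succ_self _) w hwC' hew
    obtain ⟨τ, hτle, ⟨w₂, hw₂C, hww₂⟩, hminτ⟩ :=
      minlevel (C := umbChain G u (Set.range c)) (Q := fun x => G.Adj w x) ha₀C hwa₀
    have hτσ : τ < σ'+1 := Nat.lt_succ_of_le hτle
    have hew₂ : ¬ G.Adj e w₂ := hminσ τ hτσ w₂ hw₂C
    have hdw₂ : G.Adj d w₂ := hdom τ (lt_trans hτσ hσρ) w₂ hw₂C
    by_cases hw₂Comp : ∀ i, G.Adj w₂ (c i)
    · -- w₂ complete: v₃ := its non-adjacency witness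
      match τ, hτle, hw₂C, hminτ, hτσ with
      | 0, _, hw₂C, _, _ => exact notW_comp hc hw₂C hw₂Comp
      | (τ'+1), hτle, hw₂C, hminτ, hτσ =>
      rcases hw₂C with hw₂C' | ⟨huw₂, _, ⟨v₃, hv₃C, hw₂v₃⟩⟩
      · exact hminτ τ' (Nat.lt_succ_self _) w₂ hw₂C' hww₂
      have hwv₃ : ¬ G.Adj w v₃ := hminτ τ' (Nat.lt_succ_self _) v₃ hv₃C
      have hev₃ : ¬ G.Adj e v₃ := hminσ τ' (lt_trans (Nat.lt_succ_self _) hτσ) v₃ hv₃C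
      have hdv₃ : G.Adj d v₃ :=
        hdom τ' (lt_trans (lt_trans (Nat.lt_succ_self _) hτσ) hσρ) v₃ hv₃C
      exact bull_contra hB hew hdw.symm hdv₃ hww₂ hdw₂
        (nsymm hde) hev₃ hew₂ hwv₃ (nsymm hw₂v₃)
    · push_neg at hw₂Comp
      obtain ⟨j, hj⟩ := hw₂Comp
      exact bull_contra hB hew hdw.symm (hdC j) hww₂ hdw₂
        (nsymm hde) (heA j) hew₂ (hwAnti j) (nsymm hj)
  · -- w mixed
    classical
    set f : Fin 5 → Bool := fun i => decide (G.Adj w (c i)) with hf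
    obtain ⟨i, hiT, hiF⟩ := fin5B f ⟨i1, decide_eq_true hi1⟩ ⟨i0, decide_eq_false hi0⟩
    have hwi : G.Adj w (c i) := of_decide_eq_true hiT
    have hwi2 : ¬ G.Adj w (c (i+2)) := of_decide_eq_false hiF
    exact bull_contra hB hew hdw.symm (hdC (i+2)) hwi (hdC i)
      (nsymm hde) (heA (i+2)) (heA i) hwi2
      (cnadj hc (i+2) i ((by decide : ∀ x : Fin 5, x ≠ x + 2 + 1) i)
        ((by decide : ∀ x : Fin 5, x + 2 ≠ x + 1) i))

/-- L3 bull: t adjacent to p, consecutive boundary on the cycle. -/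
lemma L3bull (hB : BullFree G) (hc : IsInducedC5 G c)
    (ht : ∀ i : Fin 5, ¬ G.Adj t (c i)) {p : V} (htp : G.Adj t p) {i : Fin 5}
    (h1 : G.Adj p (c i)) (h2 : G.Adj p (c (i+1))) (h3 : ¬ G.Adj p (c (i+2))) : False := by
  have e2 : i + 1 + 1 = i + 2 := (by decide : ∀ x : Fin 5, x + 1 + 1 = x + 2) i
  have hcd' : G.Adj (c (i+1)) (c (i+2)) := by have := cadj hc (i+1); rwa [e2] at this
  exact bull_contra hB htp h2 hcd' h1 (cadj hc i).symm
    (ht (i+1)) (ht (i+2)) (ht i) h3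
    (nsymm (cnadj hc i (i+2) ((by decide : ∀ x : Fin 5, x + 2 ≠ x + 1) i)
      ((by decide : ∀ x : Fin 5, x ≠ x + 2 + 1) i)))

/-- sparse bull anchored at a complete vertex A with ¬Adj A p -/
lemma sparseBull (hB : BullFree G) (hc : IsInducedC5 G c)
    {A p : V} (hA : ∀ i, G.Adj A (c i)) (hAp : ¬ G.Adj A p) {α : Fin 5}
    (hα : G.Adj p (c α)) (h1 : ¬ G.Adj p (c (α+1))) (h3 : ¬ G.Adj p (c (α+3))) : False :=
  bull_contra hB (hA (α+3)).symm (hA α) hα.symm (hA (α+1)) (cadj hc α)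
    (cnadj hc (α+3) α ((by decide : ∀ x : Fin 5, x ≠ x + 3 + 1) α)
      ((by decide : ∀ x : Fin 5, x + 3 ≠ x + 1) α))
    (nsymm h3)
    (cnadj hc (α+3) (α+1) ((by decide : ∀ x : Fin 5, x + 1 ≠ x + 3 + 1) α)
      ((by decide : ∀ x : Fin 5, x + 3 ≠ x + 1 + 1) α))
    hAp h1

/-- complete A adjacent to t, mixed p not adjacent to t, ¬Adj A p : contradiction -/
lemma pairCM (hB : BullFree G) (hc : IsInducedC5 G c)
    (ht : ∀ i : Fin 5, ¬ G.Adj t (c i)) {A p : V}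
    (hA : ∀ i, G.Adj A (c i)) (htA : G.Adj t A) (hAp : ¬ G.Adj A p) (htp : ¬ G.Adj t p)
    (h1 : ∃ i, G.Adj p (c i)) (h0 : ∃ j, ¬ G.Adj p (c j)) : False := by
  classical
  set f : Fin 5 → Bool := fun i => decide (G.Adj p (c i)) with hf
  obtain ⟨β, hβ, hβ1⟩ := fin5A f (h1.imp fun i h => decide_eq_true h)
    (h0.imp fun j h => decide_eq_false h)
  exact bull_contra hB htA (hA β) (of_decide_eq_true hβ).symm (hA (β+1)) (cadj hc β)
    (ht β) htp (ht (β+1)) hAp (of_decide_eq_false hβ1)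

/-- complete A with ¬Adj A p, mixed p adjacent to t : contradiction -/
lemma pairSL (hB : BullFree G) (hc : IsInducedC5 G c)
    (ht : ∀ i : Fin 5, ¬ G.Adj t (c i)) {A p : V}
    (hA : ∀ i, G.Adj A (c i)) (hAp : ¬ G.Adj A p) (htp : G.Adj t p)
    (h1 : ∃ i, G.Adj p (c i)) (h0 : ∃ j, ¬ G.Adj p (c j)) : False := by
  classical
  set f : Fin 5 → Bool := fun i => decide (G.Adj p (c i)) with hf
  rcases fin5D f (h1.imp fun i h => decide_eq_true h) (h0.imp fun j h => decide_eq_false h)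
    with ⟨α, hα, hα1, hα3⟩ | ⟨i, hi, hi1, hi2⟩
  · exact sparseBull hB hc hA hAp (of_decide_eq_true hα)
      (of_decide_eq_false hα1) (of_decide_eq_false hα3)
  · exact L3bull hB hc ht htp (of_decide_eq_true hi)
      (of_decide_eq_true hi1) (of_decide_eq_false hi2)

/-- Claim W: a complete vertex adjacent to t dominating all lower levels
cannot miss a member at level ρ. -/
lemma claimW (hB : BullFree G) (hc : IsInducedC5 G c)
    (ht : ∀ i : Fin 5, ¬ G.Adj t (c i)) {u : V} :
    ∀ ρ : ℕ, ∀ P : V, (∀ i, G.Adj P (c i)) → G.Adj t P →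
    (∀ k < ρ, ∀ x ∈ umbChain G u (Set.range c) k, G.Adj P x) →
    ∀ D ∈ umbChain G u (Set.range c) ρ, ¬ G.Adj P D → False := by
  classical
  intro ρ
  induction ρ using Nat.strong_induction_on with
  | _ ρ ih =>
  intro P hPc htP hdom D hDC hPD
  match ρ, hDC, hdom, ih with
  | 0, hDC, _, _ => obtain ⟨i, rfl⟩ := hDC; exact hPD (hPc i)
  | (ρ'+1), hDC, hdom, ih =>
  rcases hDC with hDC' | ⟨huD, _, ⟨E₀, hE₀C, hDE₀⟩⟩
  · exact hPD (hdom ρ' (Nat.lt_succ_self _) D hDC')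
  rcases trichotomyW (G := G) c D with hDComp | hDAnti | ⟨⟨i1, hi1⟩, ⟨i0, hi0⟩⟩
  · -- D complete
    obtain ⟨σ, hσle, ⟨E, hEC, hDE⟩, hminσ⟩ :=
      minlevel (C := umbChain G u (Set.range c)) (Q := fun x => ¬ G.Adj D x) hE₀C hDE₀
    have hσρ : σ < ρ'+1 := Nat.lt_succ_of_le hσle
    have hPE : G.Adj P E := hdom σ hσρ E hEC
    by_cases htD : G.Adj t D
    · exact ih σ hσρ D hDComp htD
        (fun k hk x hx => not_not.mp (hminσ k hk x hx)) E hEC hDE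
    · rcases trichotomyW (G := G) c E with hEComp | hEAnti | ⟨⟨j1, hj1⟩, ⟨j0, hj0⟩⟩
      · by_cases htE : G.Adj t E
        · -- recurse with P := E
          match σ, hσle, hEC, hminσ, hσρ with
          | 0, _, hEC, _, _ => exact notW_comp hc hEC hEComp
          | (σ'+1), hσle, hEC, hminσ, hσρ =>
          rcases hEC with hEC' | ⟨huE, _, ⟨F₀, hF₀C, hEF₀⟩⟩
          · exact hminσ σ' (Nat.lt_succ_self _) E hEC' hDE
          obtain ⟨τ, hτle, ⟨F, hFC, hEF⟩, hminτ⟩ :=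
            minlevel (C := umbChain G u (Set.range c)) (Q := fun x => ¬ G.Adj E x) hF₀C hEF₀
          exact ih τ (lt_trans (Nat.lt_succ_of_le hτle) hσρ) E hEComp htE
            (fun k hk x hx => not_not.mp (hminτ k hk x hx)) F hFC hEF
        · exact bull_contra hB htP (hPc 0) (hDComp 0).symm hPE (hEComp 0).symm
            (ht 0) htD htE hPD hDE
      · exact claimD hB hc σ E hEC hEAnti D hDComp hDE
          (fun k hk x hx => not_not.mp (hminσ k hk x hx))
      · by_cases htE : G.Adj t E
        · exact pairSL hB hc ht hDComp hDE htE ⟨j1, hj1⟩ ⟨j0, hj0⟩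
        · exact bull_contra hB htP (hPc j1) (hDComp j1).symm hPE hj1.symm
            (ht j1) htD htE hPD hDE
  · exact claimD hB hc (ρ'+1) D (Or.inr ⟨huD, ‹_›, ⟨E₀, hE₀C, hDE₀⟩⟩) hDAnti P hPc hPD hdom
  · by_cases htD : G.Adj t D
    · exact pairSL hB hc ht hPc hPD htD ⟨i1, hi1⟩ ⟨i0, hi0⟩
    · exact pairCM hB hc ht hPc htP hPD htD ⟨i1, hi1⟩ ⟨i0, hi0⟩

/-- Claim C: complete vertices not adjacent to the hub are complete to the chain. -/
lemma claimC (hB : BullFree G) (hc : IsInducedC5 G c)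
    (hu : ∀ i : Fin 5, G.Adj u (c i)) (hut : G.Adj u t)
    (ht : ∀ i : Fin 5, ¬ G.Adj t (c i))
    {y : V} (hy : ∀ i, G.Adj y (c i)) (huy : ¬ G.Adj u y) :
    ∀ n, ∀ m ≤ n, ∀ s ∈ umbChain G u (Set.range c) m, G.Adj y s := by
  classical
  intro n
  induction n with
  | zero =>
    intro m hm s hs
    interval_cases m
    obtain ⟨i, rfl⟩ := hs
    exact hy i
  | succ n ih =>
    intro m hm s hs
    rcases Nat.lt_succ_iff_lt_or_eq.mp (Nat.lt_succ_of_le hm) with h | rfl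
    · exact ih m (Nat.lt_succ_iff.mp h) s hs
    · rcases hs with hs | ⟨hsu, ⟨a, haC, hsa⟩, ⟨b, hbC, hsb⟩⟩
      · exact ih n le_rfl s hs
      by_contra hys
      rcases trichotomyW (G := G) c s with hsC | hsA | ⟨hm1, hm0⟩
      · -- s complete
        obtain ⟨ν, hνle, ⟨d₁, hd₁C, hsd₁⟩, hminν⟩ :=
          minlevel (C := umbChain G u (Set.range c)) (Q := fun x => ¬ G.Adj s x) hbC hsb
        have hdomS : ∀ k < ν, ∀ x ∈ umbChain G u (Set.range c) k, G.Adj s x :=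
          fun k hk x hx => not_not.mp (hminν k hk x hx)
        by_cases hts : G.Adj t s
        · exact claimW hB hc ht ν s hsC hts hdomS d₁ hd₁C hsd₁
        by_cases hty : G.Adj t y
        · have hyd₁ : G.Adj y d₁ := ih ν hνle d₁ hd₁C
          rcases trichotomyW (G := G) c d₁ with hd₁Comp | hd₁Anti | ⟨⟨i1, hi1⟩, ⟨i0, hi0⟩⟩
          · by_cases htd₁ : G.Adj t d₁
            · -- recurse claimW with P := d₁
              match ν, hνle, hminν with
              | 0, _, _ => obtain ⟨i, rfl⟩ := hd₁C; exact hsd₁ (hsC i)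
              | (ν'+1), hνle, hminν =>
              rcases hd₁C with hd₁C' | ⟨hud₁, _, ⟨E₀, hE₀C, hd₁E₀⟩⟩
              · exact hminν ν' (Nat.lt_succ_self _) d₁ hd₁C' hsd₁
              obtain ⟨σ, hσle, ⟨E, hEC, hd₁E⟩, hminσ⟩ :=
                minlevel (C := umbChain G u (Set.range c)) (Q := fun x => ¬ G.Adj d₁ x) hE₀C hd₁E₀
              exact claimW hB hc ht σ d₁ hd₁Comp htd₁
                (fun k hk x hx => not_not.mp (hminσ k hk x hx)) E hEC hd₁E
            · exact bull_contra hB hty (hy 0) (hsC 0).symm hyd₁ (hd₁Comp 0).symm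
                (ht 0) hts htd₁ hys hsd₁
          · exact claimD hB hc ν d₁ hd₁C hd₁Anti s hsC hsd₁ hdomS
          · by_cases htd₁ : G.Adj t d₁
            · exact pairSL hB hc ht hsC hsd₁ htd₁ ⟨i1, hi1⟩ ⟨i0, hi0⟩
            · exact bull_contra hB hty (hy i1) (hsC i1).symm hyd₁ hi1.symm
                (ht i1) hts htd₁ hys hsd₁
        · exact bull_contra hB hut.symm (hu 0) (hy 0).symm hsu (hsC 0).symm
            (ht 0) hty hts huy hys
      · -- s anti : claimD with d := y
        exact claimD hB hc (n+1) s (Or.inr ⟨hsu, ⟨a, haC, hsa⟩, ⟨b, hbC, hsb⟩⟩) hsA y hy hys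
          (fun k hk x hx => ih k (Nat.lt_succ_iff.mp hk) x hx)
      · exact hys (S3 hB hc hu hut ht hy huy hm1 hm0)

lemma umbChain_mono {G : SimpleGraph V} {u : V} {W : Set V} :
    ∀ {m n : ℕ}, m ≤ n → umbChain G u W m ⊆ umbChain G u W n := by
  intro m n h
  induction h with
  | refl => exact subset_rfl
  | step _ ih => exact fun x hx => Or.inl (ih hx)

theorem stmt5' (G : SimpleGraph V) (hB : BullFree G)
    (c : Fin 5 → V) (hc : IsInducedC5 G c)
    (u t : V) (hu : ∀ i : Fin 5, G.Adj u (c i))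
    (hut : G.Adj u t) (ht : ∀ i : Fin 5, ¬ G.Adj t (c i)) :
    ∃ S : Set V, (∀ v ∉ S, (∀ s ∈ S, G.Adj v s) ∨ (∀ s ∈ S, ¬ G.Adj v s)) ∧
      (∃ a ∈ S, ∃ b ∈ S, a ≠ b) ∧ S ≠ Set.univ ∧ ∀ i : Fin 5, c i ∈ S := by
  classical
  set W : Set V := Set.range c with hWdef
  set S : Set V := ⋃ n, umbChain G u W n with hSdef
  have hWu : ∀ x ∈ W, G.Adj u x := by rintro x ⟨i, rfl⟩; exact hu i
  have hadjU : ∀ k, ∀ x ∈ umbChain G u W k, G.Adj u x := umbChain_adj_u hWu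
  have hcmem : ∀ i, c i ∈ S := fun i => Set.mem_iUnion.mpr ⟨0, ⟨i, rfl⟩⟩
  have huS : u ∉ S := by
    intro h
    obtain ⟨n, hn⟩ := Set.mem_iUnion.mp h
    exact G.irrefl (hadjU n u hn)
  refine ⟨S, ?_, ⟨c 0, hcmem 0, c 1, hcmem 1, fun h => absurd (hc.1 h) (by decide)⟩,
      fun h => huS (h.symm ▸ Set.mem_univ u), hcmem⟩
  intro v hv
  by_cases huv : G.Adj u v
  · by_cases hEx : ∃ s ∈ S, ¬ G.Adj v s
    · by_cases hEx' : ∃ s ∈ S, G.Adj v s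
      · exfalso
        obtain ⟨b, hbS, hvb⟩ := hEx
        obtain ⟨a, haS, hva⟩ := hEx'
        obtain ⟨na, hna⟩ := Set.mem_iUnion.mp haS
        obtain ⟨nb, hnb⟩ := Set.mem_iUnion.mp hbS
        refine hv (Set.mem_iUnion.mpr ⟨max na nb + 1, Or.inr ⟨huv, ?_, ?_⟩⟩)
        · exact ⟨a, umbChain_mono (le_max_left na nb) hna, hva⟩
        · exact ⟨b, umbChain_mono (le_max_right na nb) hnb, hvb⟩
      · push_neg at hEx'
        exact Or.inr hEx'
    · push_neg at hEx
      exact Or.inl hEx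
  · by_cases hvu : v = u
    · subst hvu
      exact Or.inl fun s hs => by
        obtain ⟨n, hn⟩ := Set.mem_iUnion.mp hs
        exact hadjU n s hn
    · rcases trichotomyW (G := G) c v with hC | hAnti | ⟨h1, h0⟩
      · refine Or.inl fun s hs => ?_
        obtain ⟨n, hn⟩ := Set.mem_iUnion.mp hs
        exact claimC hB hc hu hut ht hC huv n n le_rfl s hn
      · refine Or.inr fun s hs => ?_
        obtain ⟨n, hn⟩ := Set.mem_iUnion.mp hs
        exact claimA hB hc hu hut ht hAnti huv n n le_rfl s hn
      · exact absurd (S1 hB hc hu hut ht h1 h0) huv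

theorem stmt5 (G : SimpleGraph V) (hB : BullFree G)
    (c : Fin 5 → V) (hc : IsInducedC5 G c)
    (u t : V) (hu : ∀ i : Fin 5, G.Adj u (c i))
    (hut : G.Adj u t) (ht : ∀ i : Fin 5, ¬ G.Adj t (c i)) :
    ∃ S : Set V, IsProperHomogeneous G S ∧ ∀ i : Fin 5, c i ∈ S := by
  obtain ⟨S, h1, h2, h3, h4⟩ := stmt5' G hB c hc u t hu hut ht
  exact ⟨S, ⟨h1, h2, h3⟩, h4⟩
end Umbrella
end

section
/- Let G be a prime (P6, bull)-free graph containing an induced 5-cycle C with vertices c1,...,c5 (indices mod 5), and suppose some vertex x of G has no neighbor on C. Then there exists a neighbor d of x that has exactly two neighbors on C, and consequently G contains an induced copy of the graph G7 (the 5-cycle c1,...,c5 plus vertices d, x with edges d c_i, d c_{i+3}, d x for some i). -/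
open SimpleGraph

variable {V : Type*}

/-!
Let `F` be the component of `x` among the vertices with no neighbour on `C`, and `N(F)` the set of
vertices outside `F` with a neighbour in `F`. A vertex adjacent to a vertex anticomplete to `C`
sees none of `C`, all of `C`, or exactly a pair `c_i, c_{i+3}`: every other trace on `C` yields a
bull or a `P6`. If some vertex of `N(F)` sees such a pair, `P6`-freeness pushes its adjacency
along `F` back to `x`. Otherwise `N(F)` is complete to `C`; call a vertex blocked if it is complete
to `C` but misses a vertex of `N(F)`. Then bull-freeness makes the component of `c_0` among the
vertices outside `F ∪ N(F)` that are not blocked a proper homogeneous set, so `G` is not prime.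
-/

open Relation

variable {G : SimpleGraph V}

theorem BullFree.false_of_adj (hB : BullFree G) {a b c d e : V}
    (hab : G.Adj a b) (hbc : G.Adj b c) (hcd : G.Adj c d) (hbe : G.Adj b e) (hce : G.Adj c e)
    (hac : ¬G.Adj a c) (had : ¬G.Adj a d) (hae : ¬G.Adj a e) (hbd : ¬G.Adj b d)
    (hde : ¬G.Adj d e) : False := by
  refine hB a b c d e ⟨hab.ne, ?_, ?_, ?_, hbc.ne, ?_, hbe.ne, hcd.ne, hce.ne, ?_,
    hab, hbc, hcd, hbe, hce, hac, had, hae, hbd, hde⟩ <;> rintro rfl <;> simp_all [adj_comm]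

theorem P6Free.false_of_adj (hP : P6Free G) {a b c d e f : V}
    (hab : G.Adj a b) (hbc : G.Adj b c) (hcd : G.Adj c d) (hde : G.Adj d e) (hef : G.Adj e f)
    (hac : ¬G.Adj a c) (had : ¬G.Adj a d) (hae : ¬G.Adj a e) (haf : ¬G.Adj a f)
    (hbd : ¬G.Adj b d) (hbe : ¬G.Adj b e) (hbf : ¬G.Adj b f)
    (hce : ¬G.Adj c e) (hcf : ¬G.Adj c f) (hdf : ¬G.Adj d f) : False := by
  have hadj : ∀ i j : Fin 6, G.Adj (![a, b, c, d, e, f] i) (![a, b, c, d, e, f] j) ↔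
      (i.val + 1 = j.val ∨ j.val + 1 = i.val) := by
    intro i j
    fin_cases i <;> fin_cases j <;> simp [*, adj_comm]
  refine hP ⟨_, fun i j hij => ?_, hadj⟩
  -- distinct vertices of a path have distinct neighbourhoods
  have hnbrs : ∀ k : Fin 6, (i.val + 1 = k.val ∨ k.val + 1 = i.val) ↔
      (j.val + 1 = k.val ∨ k.val + 1 = j.val) := fun k => by rw [← hadj, ← hadj, hij]
  clear hij
  revert i j
  decide

theorem Fin.exists_and_not_add_one {n : ℕ} {p : Fin (n + 1) → Prop} {i : Fin (n + 1)}
    (hi : p i) (h : ¬∀ j, p j) : ∃ k, p k ∧ ¬p (k + 1) := by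
  by_contra! hsucc
  have hall : ∀ k : Fin (n + 1), p (i + k) := fun k => by
    induction k using Fin.induction with
    | zero => simpa using hi
    | succ k ih => rw [← Fin.coeSucc_eq_succ, ← add_assoc]; exact hsucc _ ih
  exact h fun j => by simpa using hall (j - i)

theorem Finset.fin_five_eq_empty_or_univ_or_pair (s : Finset (Fin 5))
    (hpair : ∀ i ∈ s, i + 1 ∈ s → i + 4 ∈ s)
    (hsingle : ∀ i ∈ s, i + 1 ∈ s ∨ i + 2 ∈ s ∨ i + 3 ∈ s) :
    s = ∅ ∨ s = Finset.univ ∨ ∃ i, s = {i, i + 3} := by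
  revert s
  decide

namespace SimpleGraph

def reachThrough (G : SimpleGraph V) (s : Set V) (r : V) : Set V :=
  {t | ReflTransGen (fun a b => G.Adj a b ∧ b ∈ s) r t}

variable {s : Set V} {r : V}

theorem self_mem_reachThrough : r ∈ G.reachThrough s r := ReflTransGen.refl

theorem mem_reachThrough_of_adj {t v : V} (ht : t ∈ G.reachThrough s r) (htv : G.Adj t v)
    (hv : v ∈ s) : v ∈ G.reachThrough s r :=
  ReflTransGen.tail ht ⟨htv, hv⟩

theorem reachThrough_induction {P : V → Prop} (h₀ : P r)
    (step : ∀ t v, t ∈ G.reachThrough s r → G.Adj t v → v ∈ s → P t → P v)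
    {t : V} (ht : t ∈ G.reachThrough s r) : P t := by
  induction ht with
  | refl => exact h₀
  | tail ht hv ih => exact step _ _ ht hv.1 hv.2 ih

theorem reachThrough_subset (hr : r ∈ s) : G.reachThrough s r ⊆ s :=
  fun _ ht => reachThrough_induction hr (fun _ _ _ _ hv _ => hv) ht

end SimpleGraph

section FarComponent

variable {ι : Type*} (G) (c : ι → V) (x : V)

def farComponent : Set V := G.reachThrough {v | ∀ i, ¬G.Adj v (c i)} x

def farBoundary : Set V :=
  {v | v ∉ farComponent G c x ∧ ∃ u ∈ farComponent G c x, G.Adj u v}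

def blocked : Set V := {v | (∀ i, G.Adj v (c i)) ∧ ∃ y ∈ farBoundary G c x, ¬G.Adj y v}

def remote : Set V :=
  {v | v ∉ farComponent G c x ∧ v ∉ farBoundary G c x ∧ v ∉ blocked G c x}

variable {G c x}

theorem anticomplete_of_mem_farComponent (hx : ∀ i, ¬G.Adj x (c i)) {v : V}
    (hv : v ∈ farComponent G c x) : ∀ i, ¬G.Adj v (c i) :=
  reachThrough_subset (s := {v | ∀ i, ¬G.Adj v (c i)}) hx hv

theorem not_adj_of_mem_remote {u v : V} (hu : u ∈ farComponent G c x) (hv : v ∈ remote G c x) :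
    ¬G.Adj u v :=
  fun h => hv.2.1 ⟨hv.1, u, hu, h⟩

end FarComponent

def nearComponent (G : SimpleGraph V) (c : Fin 5 → V) (x : V) : Set V :=
  G.reachThrough (remote G c x) (c 0)

theorem nbrCount_eq_two [DecidableRel G.Adj] {c : Fin 5 → V} {d : V} {i : Fin 5}
    (h : ∀ j, G.Adj d (c j) ↔ j = i ∨ j = i + 3) : nbrCount G c d = 2 := by
  have : Finset.univ.filter (fun j => G.Adj d (c j)) = {i, i + 3} := by ext j; simp [h]
  rw [nbrCount, this, Finset.card_pair (by omega)]

namespace IsInducedC5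

variable {c : Fin 5 → V} {x : V}

theorem adj (hc : IsInducedC5 G c) {i j : Fin 5} (h : j = i + 1 ∨ i = j + 1 := by omega) :
    G.Adj (c i) (c j) :=
  (hc.2 i j).2 h

theorem not_adj (hc : IsInducedC5 G c) {i j : Fin 5} (h₁ : j ≠ i + 1 := by omega)
    (h₂ : i ≠ j + 1 := by omega) : ¬G.Adj (c i) (c j) :=
  fun h => ((hc.2 i j).1 h).elim h₁ h₂

theorem nbrs_trichotomy (hc : IsInducedC5 G c) (hB : BullFree G) (hP : P6Free G) {w v : V}
    (hw : ∀ i, ¬G.Adj w (c i)) (hwv : G.Adj w v) :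
    (∀ i, ¬G.Adj v (c i)) ∨ (∀ i, G.Adj v (c i)) ∨
      ∃ i, ∀ j, G.Adj v (c j) ↔ j = i ∨ j = i + 3 := by
  classical
  set s := Finset.univ.filter fun i => G.Adj v (c i)
  have hs : ∀ i, i ∈ s ↔ G.Adj v (c i) := by simp [s]
  have hpair : ∀ i ∈ s, i + 1 ∈ s → i + 4 ∈ s := by
    simp only [hs]
    intro i h₀ h₁
    by_contra h₄
    -- the bull `w - v - c i - c (i + 4)` with `c (i + 1)` on the triangle
    exact hB.false_of_adj hwv h₀ hc.adj h₁ hc.adj (hw _) (hw _) (hw _) h₄ hc.not_adj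
  have hsingle : ∀ i ∈ s, i + 1 ∈ s ∨ i + 2 ∈ s ∨ i + 3 ∈ s := by
    simp only [hs]
    intro i h₀
    by_contra! ⟨h₁, h₂, h₃⟩
    -- the path `w - v - c i - c (i + 1) - c (i + 2) - c (i + 3)`
    exact hP.false_of_adj hwv h₀ hc.adj hc.adj hc.adj (hw _) (hw _) (hw _) (hw _) h₁ h₂ h₃
      hc.not_adj hc.not_adj hc.not_adj
  rcases s.fin_five_eq_empty_or_univ_or_pair hpair hsingle with h | h | ⟨i, h⟩
  · exact .inl fun j => by simpa [h] using hs j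
  · exact .inr <| .inl fun j => by simpa [h] using hs j
  · exact .inr <| .inr ⟨i, fun j => by simpa [h] using (hs j).symm⟩

theorem mem_remote (hc : IsInducedC5 G c) (hx : ∀ i, ¬G.Adj x (c i)) (i : Fin 5) :
    c i ∈ remote G c x :=
  ⟨fun h => anticomplete_of_mem_farComponent hx h (i + 1) hc.adj,
    fun ⟨_, _, hu, h⟩ => anticomplete_of_mem_farComponent hx hu i h,
    fun ⟨h, _⟩ => G.irrefl (h i)⟩

theorem nearComponent_subset_remote (hc : IsInducedC5 G c) (hx : ∀ i, ¬G.Adj x (c i)) :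
    nearComponent G c x ⊆ remote G c x :=
  reachThrough_subset (hc.mem_remote hx 0)

theorem adj_of_adj_farComponent (hc : IsInducedC5 G c) (hP : P6Free G)
    (hx : ∀ i, ¬G.Adj x (c i)) {z u : V} {i : Fin 5}
    (hz : ∀ j, G.Adj z (c j) ↔ j = i ∨ j = i + 3) (hu : u ∈ farComponent G c x)
    (hzu : G.Adj z u) : G.Adj z x := by
  refine reachThrough_induction (P := fun u => G.Adj z u → G.Adj z x) id
    (fun a b ha hab hb ih hzb => ih ?_) hu hzu
  by_contra hza
  have ha := anticomplete_of_mem_farComponent hx ha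
  exact hP.false_of_adj (d := c i) (e := c (i + 1)) (f := c (i + 2)) hab hzb.symm
    ((hz i).2 (.inl rfl)) hc.adj hc.adj (fun h => hza h.symm) (ha _) (ha _) (ha _)
    (hb _) (hb _) (hb _) (by rw [hz]; omega) (by rw [hz]; omega) hc.not_adj

/-- The induction along `nearComponent` also carries that `y` sees every remote neighbour of the
current vertex `b`: a remote non-neighbour `t` of `y` adjacent to `b` then yields the bull
`u - y - b - t` with the predecessor `s` of `b` on the triangle. -/
theorem adj_nearComponent_of_mem_farBoundary (hc : IsInducedC5 G c) (hB : BullFree G)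
    (hx : ∀ i, ¬G.Adj x (c i)) {y : V} (hy : y ∈ farBoundary G c x)
    (hyC : ∀ i, G.Adj y (c i)) {t : V} (ht : t ∈ nearComponent G c x) : G.Adj y t := by
  obtain ⟨u, hu, huy⟩ := hy.2
  have huC := anticomplete_of_mem_farComponent hx hu
  have hrem := hc.nearComponent_subset_remote hx
  refine (reachThrough_induction
    (P := fun b => G.Adj y b ∧ ∀ t ∈ remote G c x, G.Adj b t → G.Adj y t)
    ⟨hyC 0, fun t ht h0t => ?_⟩
    (fun s b hs hsb hb ⟨hys, ih⟩ => ⟨ih b hb hsb, fun t ht hbt => ?_⟩) ht).1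
  · by_contra hyt
    obtain ⟨i, hti, hti'⟩ := Fin.exists_and_not_add_one (p := fun i => G.Adj t (c i)) h0t.symm
      fun htC => ht.2.2 ⟨htC, y, hy, hyt⟩
    -- the bull `u - y - c i - t` with `c (i + 1)` on the triangle
    exact hB.false_of_adj huy (hyC i) hti.symm (hyC _) hc.adj (huC _)
      (not_adj_of_mem_remote hu ht) (huC _) hyt hti'
  · by_contra hyt
    by_cases hst : G.Adj s t
    · exact hyt (ih t ht hst)
    exact hB.false_of_adj huy (ih b hb hsb) hbt hys hsb.symm (not_adj_of_mem_remote hu hb)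
      (not_adj_of_mem_remote hu ht) (not_adj_of_mem_remote hu (hrem hs)) hyt
      fun h => hst h.symm

theorem adj_nearComponent_of_mem_blocked (hc : IsInducedC5 G c) (hB : BullFree G)
    (hx : ∀ i, ¬G.Adj x (c i)) (hcomplete : ∀ y ∈ farBoundary G c x, ∀ i, G.Adj y (c i))
    {v : V} (hv : v ∈ blocked G c x) (hvN : v ∉ farBoundary G c x) {t : V}
    (ht : t ∈ nearComponent G c x) : G.Adj v t := by
  obtain ⟨hvC, y, hy, hyv⟩ := hv
  obtain ⟨u, hu, huy⟩ := hy.2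
  have hvF : v ∉ farComponent G c x :=
    fun h => anticomplete_of_mem_farComponent hx h 0 (hvC 0)
  have hyS : ∀ {t}, t ∈ nearComponent G c x → G.Adj y t :=
    hc.adj_nearComponent_of_mem_farBoundary hB hx hy (hcomplete y hy)
  refine reachThrough_induction (hvC 0) (fun s b hs hsb hb hvs => ?_) ht
  by_contra hvb
  -- the bull `u - y - s - v` with `b` on the triangle
  exact hB.false_of_adj huy (hyS hs) hvs.symm (hyS (mem_reachThrough_of_adj hs hsb hb)) hsb
    (not_adj_of_mem_remote hu (hc.nearComponent_subset_remote hx hs))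
    (fun h => hvN ⟨hvF, u, hu, h⟩) (not_adj_of_mem_remote hu hb) hyv hvb

theorem isProperHomogeneous_nearComponent (hc : IsInducedC5 G c) (hB : BullFree G)
    (hx : ∀ i, ¬G.Adj x (c i)) (hcomplete : ∀ y ∈ farBoundary G c x, ∀ i, G.Adj y (c i)) :
    IsProperHomogeneous G (nearComponent G c x) := by
  have hrem := hc.nearComponent_subset_remote hx
  refine ⟨fun v hv => ?_, ⟨c 0, self_mem_reachThrough, c 1,
    mem_reachThrough_of_adj self_mem_reachThrough hc.adj (hc.mem_remote hx 1),
    hc.1.ne (by decide)⟩, fun h => (hrem (h ▸ Set.mem_univ x)).1 self_mem_reachThrough⟩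
  by_cases hvF : v ∈ farComponent G c x
  · exact .inr fun s hs => not_adj_of_mem_remote hvF (hrem hs)
  by_cases hvN : v ∈ farBoundary G c x
  · exact .inl fun s => hc.adj_nearComponent_of_mem_farBoundary hB hx hvN (hcomplete v hvN)
  by_cases hvX : v ∈ blocked G c x
  · exact .inl fun s => hc.adj_nearComponent_of_mem_blocked hB hx hcomplete hvX hvN
  · exact .inr fun s hs hvs => hv (mem_reachThrough_of_adj hs hvs.symm ⟨hvF, hvN, hvX⟩)

end IsInducedC5

theorem stmt7_general (G : SimpleGraph V) [DecidableRel G.Adj]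
    (hP : P6Free G) (hB : BullFree G) (hPr : IsPrimeGraph G)
    (c : Fin 5 → V) (hc : IsInducedC5 G c)
    (x : V) (hx0 : ∀ i : Fin 5, ¬ G.Adj x (c i)) :
    ∃ d : V, G.Adj x d ∧ nbrCount G c d = 2 ∧
      ∃ i : Fin 5, G.Adj d (c i) ∧ G.Adj d (c (i + 3)) ∧
        ∀ j : Fin 5, j ≠ i → j ≠ i + 3 → ¬ G.Adj d (c j) := by
  by_cases hZ : ∃ z ∈ farBoundary G c x, ∃ i, ∀ j, G.Adj z (c j) ↔ j = i ∨ j = i + 3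
  · obtain ⟨z, ⟨-, u, hu, huz⟩, i, hz⟩ := hZ
    exact ⟨z, (hc.adj_of_adj_farComponent hP hx0 hz hu huz.symm).symm, nbrCount_eq_two hz, i,
      (hz i).2 (.inl rfl), (hz _).2 (.inr rfl), fun j h₁ h₂ => by simp [hz, h₁, h₂]⟩
  · refine (hPr ⟨_, hc.isProperHomogeneous_nearComponent hB hx0
      fun y ⟨hyF, u, hu, huy⟩ => ?_⟩).elim
    rcases hc.nbrs_trichotomy hB hP (anticomplete_of_mem_farComponent hx0 hu) huy
      with hyC | hyC | hyC
    · exact absurd (mem_reachThrough_of_adj hu huy hyC) hyF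
    · exact hyC
    · exact absurd ⟨y, ⟨hyF, u, hu, huy⟩, hyC⟩ hZ

theorem stmt7 (G : SimpleGraph V) [DecidableRel G.Adj]
    (hP : P6Free G) (hB : BullFree G) (hPr : IsPrimeGraph G)
    (c : Fin 5 → V) (hc : IsInducedC5 G c)
    (x : V) (hx : x ∉ Set.range c) (hx0 : ∀ i : Fin 5, ¬ G.Adj x (c i)) :
    ∃ d : V, G.Adj x d ∧ nbrCount G c d = 2 ∧
      ∃ i : Fin 5, G.Adj d (c i) ∧ G.Adj d (c (i + 3)) ∧
        ∀ j : Fin 5, j ≠ i → j ≠ i + 3 → ¬ G.Adj d (c j) :=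
  stmt7_general G hP hB hPr c hc x hx0
end

section
/- Let G be a prime (P6, bull)-free graph containing an induced 5-cycle C with vertices c1,...,c5 (edges c_i c_{i+1} mod 5), a vertex d adjacent to exactly c1 and c4 on C, and a vertex x whose only neighbor among {c1,...,c5,d} is d. Then every vertex outside C with exactly four neighbors on C is non-adjacent to c5, i.e., is complete to {c1,c2,c3,c4}. -/
open SimpleGraph

variable {V : Type*}

theorem stmt9 (G : SimpleGraph V) [DecidableRel G.Adj]
    (hP : P6Free G) (hB : BullFree G) (hPr : IsPrimeGraph G)
    (c : Fin 5 → V) (hc : IsInducedC5 G c)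
    (d : V) (hd : d ∉ Set.range c)
    (hd0 : G.Adj d (c 0)) (hd3 : G.Adj d (c 3))
    (hdno : ∀ i : Fin 5, i ≠ 0 → i ≠ 3 → ¬ G.Adj d (c i))
    (x : V) (hx : x ∉ Set.range c) (hxd : G.Adj x d)
    (hx0 : ∀ i : Fin 5, ¬ G.Adj x (c i)) :
    ∀ f : V, f ∉ Set.range c → nbrCount G c f = 4 →
      ¬ G.Adj f (c 4) ∧ ∀ i : Fin 5, i ≠ 4 → G.Adj f (c i) := by
  obtain ⟨hinj, hcyc⟩ := hc
  intro f hf hcount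
  have A : ∀ i j : Fin 5, (j = i + 1 ∨ i = j + 1) → G.Adj (c i) (c j) :=
    fun i j h => (hcyc i j).mpr h
  have NA : ∀ i j : Fin 5, ¬(j = i + 1 ∨ i = j + 1) → ¬ G.Adj (c i) (c j) :=
    fun i j h hadj => h ((hcyc i j).mp hadj)
  have cne : ∀ i j : Fin 5, i ≠ j → c i ≠ c j := fun i j h he => h (hinj he)
  have dc : ∀ i : Fin 5, d ≠ c i := fun i h => hd ⟨i, h.symm⟩
  have xc : ∀ i : Fin 5, x ≠ c i := fun i h => hx ⟨i, h.symm⟩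
  have fc : ∀ i : Fin 5, f ≠ c i := fun i h => hf ⟨i, h.symm⟩
  have hxdne : x ≠ d := G.ne_of_adj hxd
  have hcount' : (Finset.univ.filter fun i : Fin 5 => G.Adj f (c i)).card = 4 := hcount
  have h1 : (Finset.univ.filter fun i : Fin 5 => ¬ G.Adj f (c i)).card = 1 := by
    have h2 := Finset.card_filter_add_card_filter_not
      (s := (Finset.univ : Finset (Fin 5))) (p := fun i : Fin 5 => G.Adj f (c i))
    rw [hcount'] at h2
    simp only [Finset.card_univ, Fintype.card_fin] at h2
    omega
  obtain ⟨k, hk⟩ := Finset.card_eq_one.mp h1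
  have hmiss : ¬ G.Adj f (c k) := by
    have hmem : k ∈ Finset.univ.filter fun i : Fin 5 => ¬ G.Adj f (c i) := by
      rw [hk]; exact Finset.mem_singleton_self k
    simpa using hmem
  have hhit : ∀ i : Fin 5, i ≠ k → G.Adj f (c i) := by
    intro i hik
    by_contra h
    have hmem : i ∈ Finset.univ.filter fun j : Fin 5 => ¬ G.Adj f (c j) := by
      simp [h]
    rw [hk, Finset.mem_singleton] at hmem
    exact hik hmem
  suffices hk4 : k = 4 by
    subst hk4
    exact ⟨hmiss, fun i hi => hhit i hi⟩
  have h5 : ∀ j : Fin 5, j = 0 ∨ j = 1 ∨ j = 2 ∨ j = 3 ∨ j = 4 := by decide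
  rcases h5 k with rfl | rfl | rfl | rfl | rfl
  -- Case k = 0 : f adjacent to c1,c2,c3,c4
  · exfalso
    have hfd' : f ≠ d := fun h => hdno 1 (by decide) (by decide) (h ▸ hhit 1 (by decide))
    have hfx' : f ≠ x := fun h => hx0 1 (h ▸ hhit 1 (by decide))
    by_cases hfx : G.Adj f x
    · -- bull (c0, c1, f, x, c2)
      exact hB (c 0) (c 1) f x (c 2)
        ⟨cne 0 1 (by decide), (fc 0).symm, (xc 0).symm, cne 0 2 (by decide),
         (fc 1).symm, (xc 1).symm, cne 1 2 (by decide), hfx', fc 2, xc 2,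
         A 0 1 (by decide), (hhit 1 (by decide)).symm, hfx, A 1 2 (by decide),
         hhit 2 (by decide),
         fun h => hmiss h.symm, fun h => hx0 0 h.symm, NA 0 2 (by decide),
         fun h => hx0 1 h.symm, hx0 2⟩
    · by_cases hfd : G.Adj f d
      · -- bull (c1, f, d, x, c3)
        exact hB (c 1) f d x (c 3)
          ⟨(fc 1).symm, (dc 1).symm, (xc 1).symm, cne 1 3 (by decide),
           hfd', hfx', fc 3, hxdne.symm, dc 3, xc 3,
           (hhit 1 (by decide)).symm, hfd, hxd.symm, hhit 3 (by decide), hd3,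
           fun h => hdno 1 (by decide) (by decide) h.symm, fun h => hx0 1 h.symm,
           NA 1 3 (by decide), hfx, hx0 3⟩
      · -- bull (c1, f, c3, d, c4)
        exact hB (c 1) f (c 3) d (c 4)
          ⟨(fc 1).symm, cne 1 3 (by decide), (dc 1).symm, cne 1 4 (by decide),
           fc 3, hfd', fc 4, (dc 3).symm, cne 3 4 (by decide), dc 4,
           (hhit 1 (by decide)).symm, hhit 3 (by decide), hd3.symm,
           hhit 4 (by decide), A 3 4 (by decide),
           NA 1 3 (by decide), fun h => hdno 1 (by decide) (by decide) h.symm,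
           NA 1 4 (by decide), hfd, hdno 4 (by decide) (by decide)⟩
  -- Case k = 1 : f adjacent to c0,c2,c3,c4
  · exfalso
    have hfd' : f ≠ d := fun h => hdno 2 (by decide) (by decide) (h ▸ hhit 2 (by decide))
    have hfx' : f ≠ x := fun h => hx0 0 (h ▸ hhit 0 (by decide))
    by_cases hfx : G.Adj f x
    · -- bull (c1, c0, f, x, c4)
      exact hB (c 1) (c 0) f x (c 4)
        ⟨cne 1 0 (by decide), (fc 1).symm, (xc 1).symm, cne 1 4 (by decide),
         (fc 0).symm, (xc 0).symm, cne 0 4 (by decide), hfx', fc 4, xc 4,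
         A 1 0 (by decide), (hhit 0 (by decide)).symm, hfx, A 0 4 (by decide),
         hhit 4 (by decide),
         fun h => hmiss h.symm, fun h => hx0 1 h.symm, NA 1 4 (by decide),
         fun h => hx0 0 h.symm, hx0 4⟩
    · by_cases hfd : G.Adj f d
      · -- bull (c1, c0, d, x, f)
        exact hB (c 1) (c 0) d x f
          ⟨cne 1 0 (by decide), (dc 1).symm, (xc 1).symm, (fc 1).symm,
           (dc 0).symm, (xc 0).symm, (fc 0).symm, hxdne.symm, hfd'.symm, hfx'.symm,
           A 1 0 (by decide), hd0.symm, hxd.symm, (hhit 0 (by decide)).symm, hfd.symm,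
           fun h => hdno 1 (by decide) (by decide) h.symm, fun h => hx0 1 h.symm,
           fun h => hmiss h.symm, fun h => hx0 0 h.symm, fun h => hfx h.symm⟩
      · -- bull (c1, c2, c3, d, f)
        exact hB (c 1) (c 2) (c 3) d f
          ⟨cne 1 2 (by decide), cne 1 3 (by decide), (dc 1).symm, (fc 1).symm,
           cne 2 3 (by decide), (dc 2).symm, (fc 2).symm, (dc 3).symm, (fc 3).symm,
           hfd'.symm,
           A 1 2 (by decide), A 2 3 (by decide), hd3.symm,
           (hhit 2 (by decide)).symm, (hhit 3 (by decide)).symm,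
           NA 1 3 (by decide), fun h => hdno 1 (by decide) (by decide) h.symm,
           fun h => hmiss h.symm, fun h => hdno 2 (by decide) (by decide) h.symm,
           fun h => hfd h.symm⟩
  -- Case k = 2 : f adjacent to c0,c1,c3,c4
  · exfalso
    have hfd' : f ≠ d := fun h => hdno 1 (by decide) (by decide) (h ▸ hhit 1 (by decide))
    have hfx' : f ≠ x := fun h => hx0 1 (h ▸ hhit 1 (by decide))
    by_cases hfx : G.Adj f x
    · -- bull (c2, c1, f, x, c0)
      exact hB (c 2) (c 1) f x (c 0)
        ⟨cne 2 1 (by decide), (fc 2).symm, (xc 2).symm, cne 2 0 (by decide),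
         (fc 1).symm, (xc 1).symm, cne 1 0 (by decide), hfx', fc 0, xc 0,
         A 2 1 (by decide), (hhit 1 (by decide)).symm, hfx, A 1 0 (by decide),
         hhit 0 (by decide),
         fun h => hmiss h.symm, fun h => hx0 2 h.symm, NA 2 0 (by decide),
         fun h => hx0 1 h.symm, hx0 0⟩
    · by_cases hfd : G.Adj f d
      · -- bull (c1, f, d, x, c3)
        exact hB (c 1) f d x (c 3)
          ⟨(fc 1).symm, (dc 1).symm, (xc 1).symm, cne 1 3 (by decide),
           hfd', hfx', fc 3, hxdne.symm, dc 3, xc 3,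
           (hhit 1 (by decide)).symm, hfd, hxd.symm, hhit 3 (by decide), hd3,
           fun h => hdno 1 (by decide) (by decide) h.symm, fun h => hx0 1 h.symm,
           NA 1 3 (by decide), hfx, hx0 3⟩
      · -- bull (c1, f, c3, d, c4)
        exact hB (c 1) f (c 3) d (c 4)
          ⟨(fc 1).symm, cne 1 3 (by decide), (dc 1).symm, cne 1 4 (by decide),
           fc 3, hfd', fc 4, (dc 3).symm, cne 3 4 (by decide), dc 4,
           (hhit 1 (by decide)).symm, hhit 3 (by decide), hd3.symm,
           hhit 4 (by decide), A 3 4 (by decide),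
           NA 1 3 (by decide), fun h => hdno 1 (by decide) (by decide) h.symm,
           NA 1 4 (by decide), hfd, hdno 4 (by decide) (by decide)⟩
  -- Case k = 3 : f adjacent to c0,c1,c2,c4
  · exfalso
    have hfd' : f ≠ d := fun h => hdno 1 (by decide) (by decide) (h ▸ hhit 1 (by decide))
    have hfx' : f ≠ x := fun h => hx0 1 (h ▸ hhit 1 (by decide))
    by_cases hfd : G.Adj f d
    · by_cases hfx : G.Adj f x
      · -- bull (c1, f, d, c3, x)
        exact hB (c 1) f d (c 3) x
          ⟨(fc 1).symm, (dc 1).symm, cne 1 3 (by decide), (xc 1).symm,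
           hfd', fc 3, hfx', dc 3, hxdne.symm, (xc 3).symm,
           (hhit 1 (by decide)).symm, hfd, hd3, hfx, hxd.symm,
           fun h => hdno 1 (by decide) (by decide) h.symm, NA 1 3 (by decide),
           fun h => hx0 1 h.symm, hmiss, fun h => hx0 3 h.symm⟩
      · -- bull (c2, f, d, x, c0)
        exact hB (c 2) f d x (c 0)
          ⟨(fc 2).symm, (dc 2).symm, (xc 2).symm, cne 2 0 (by decide),
           hfd', hfx', fc 0, hxdne.symm, dc 0, xc 0,
           (hhit 2 (by decide)).symm, hfd, hxd.symm, hhit 0 (by decide), hd0,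
           fun h => hdno 2 (by decide) (by decide) h.symm, fun h => hx0 2 h.symm,
           NA 2 0 (by decide), hfx, hx0 0⟩
    · -- bull (c2, f, c0, d, c4)
      exact hB (c 2) f (c 0) d (c 4)
        ⟨(fc 2).symm, cne 2 0 (by decide), (dc 2).symm, cne 2 4 (by decide),
         fc 0, hfd', fc 4, (dc 0).symm, cne 0 4 (by decide), dc 4,
         (hhit 2 (by decide)).symm, hhit 0 (by decide), hd0.symm,
         hhit 4 (by decide), A 0 4 (by decide),
         NA 2 0 (by decide), fun h => hdno 2 (by decide) (by decide) h.symm,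
         NA 2 4 (by decide), hfd, hdno 4 (by decide) (by decide)⟩
  · rfl
end

section
/- Let G be a prime (P6, bull)-free graph containing an induced G7: an induced 5-cycle C on c1,...,c5 (edges c_i c_{i+1} mod 5) together with vertices d, x where d is adjacent exactly to c1, c4, x among these vertices and x is adjacent only to d. Let F be the set of vertices outside C with exactly four neighbors on C. Then every vertex of F is complete to {c1,c2,c3,c4} and anticomplete to {c5, d, x}. -/
open SimpleGraph

variable {V : Type*}

/-! A vertex `f` with four neighbours on the cycle misses exactly one `c k`. It is not adjacent
to `x`, since otherwise `c k, c (k + 1), f, x, c (k + 2)` would be a bull; nor to `d`, since `f`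
sees `c 1, c 3` or `c 2, c 0`, and with `x, d` these would form a bull. Finally `k = 4`: for
`k = 0` and `k = 3` the paths `x d c₀ c₄ f c₂` and `x d c₃ c₄ f c₁` are induced `P₆`s, and for
`k = 1` and `k = 2` the vertices `d c₀ f c₂ c₄` and `d c₃ f c₁ c₄` induce bulls. -/

section

variable {G : SimpleGraph V}

theorem BullFree.false_of_induced (hB : BullFree G) (a b c d e : V)
    (hab : G.Adj a b) (hbc : G.Adj b c) (hcd : G.Adj c d) (hbe : G.Adj b e) (hce : G.Adj c e)
    (hac : ¬ G.Adj a c) (had : ¬ G.Adj a d) (hae : ¬ G.Adj a e)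
    (hbd : ¬ G.Adj b d) (hde : ¬ G.Adj d e) : False := by
  refine hB a b c d e ⟨hab.ne, ?_, ?_, ?_, hbc.ne, ?_, hbe.ne, hcd.ne, hce.ne, ?_,
    hab, hbc, hcd, hbe, hce, hac, had, hae, hbd, hde⟩ <;> rintro rfl
  exacts [had hcd, hbd hab.symm, hac hce.symm, had hab, hbd hbe]

theorem P6Free.false_of_induced (hP : P6Free G) (v₀ v₁ v₂ v₃ v₄ v₅ : V)
    (h₀₁ : G.Adj v₀ v₁) (h₁₂ : G.Adj v₁ v₂) (h₂₃ : G.Adj v₂ v₃)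
    (h₃₄ : G.Adj v₃ v₄) (h₄₅ : G.Adj v₄ v₅)
    (h₀₂ : ¬ G.Adj v₀ v₂) (h₀₃ : ¬ G.Adj v₀ v₃) (h₀₄ : ¬ G.Adj v₀ v₄) (h₀₅ : ¬ G.Adj v₀ v₅)
    (h₁₃ : ¬ G.Adj v₁ v₃) (h₁₄ : ¬ G.Adj v₁ v₄) (h₁₅ : ¬ G.Adj v₁ v₅)
    (h₂₄ : ¬ G.Adj v₂ v₄) (h₂₅ : ¬ G.Adj v₂ v₅) (h₃₅ : ¬ G.Adj v₃ v₅) : False := by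
  set p : Fin 6 → V := ![v₀, v₁, v₂, v₃, v₄, v₅]
  have hp : ∀ i j : Fin 6, G.Adj (p i) (p j) ↔ (i.val + 1 = j.val ∨ j.val + 1 = i.val) := by
    intro i j
    fin_cases i <;> fin_cases j <;> simp [p, G.adj_comm, *]
  refine hP ⟨p, fun i j hij => ?_, hp⟩
  -- distinct positions on a path have distinct neighbourhoods
  have hnbr : ∀ k : Fin 6, (i.val + 1 = k.val ∨ k.val + 1 = i.val) ↔
      (j.val + 1 = k.val ∨ k.val + 1 = j.val) := fun k => by rw [← hp, ← hp, hij]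
  clear hij
  revert i j
  decide

end

section

variable {G : SimpleGraph V} {c : Fin 5 → V}

theorem IsInducedC5.adj_s10 (hc : IsInducedC5 G c) {i j : Fin 5}
    (h : j = i + 1 ∨ i = j + 1 := by decide) : G.Adj (c i) (c j) :=
  (hc.2 i j).2 h

theorem IsInducedC5.not_adj_s10 (hc : IsInducedC5 G c) {i j : Fin 5}
    (h : ¬ (j = i + 1 ∨ i = j + 1) := by decide) : ¬ G.Adj (c i) (c j) :=
  mt (hc.2 i j).1 h

theorem exists_forall_adj_iff_ne_of_nbrCount_eq_four [DecidableRel G.Adj] {f : V}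
    (hf : nbrCount G c f = 4) : ∃ k, ∀ i, G.Adj f (c i) ↔ i ≠ k := by
  have hmiss : (Finset.univ.filter fun i => ¬ G.Adj f (c i)).card = 1 := by
    have := Finset.card_filter_add_card_filter_not (s := Finset.univ) (fun i => G.Adj f (c i))
    rw [nbrCount] at hf
    simp only [Finset.card_univ, Fintype.card_fin] at this
    omega
  obtain ⟨k, hk⟩ := Finset.card_eq_one.mp hmiss
  refine ⟨k, fun i => ?_⟩
  simpa using (Finset.ext_iff.mp hk i).not

theorem BullFree.not_adj_of_forall_not_adj_cycle (hB : BullFree G) (hc : IsInducedC5 G c)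
    {f x : V} (hx : ∀ i, ¬ G.Adj x (c i)) {k : Fin 5} (hk : ¬ G.Adj f (c k))
    (hk₁ : G.Adj f (c (k + 1))) (hk₂ : G.Adj f (c (k + 2))) : ¬ G.Adj f x := by
  intro hfx
  have hsucc : k + 2 = k + 1 + 1 := by clear hk hk₁ hk₂; revert k; decide
  have hnot : ¬ (k + 2 = k + 1 ∨ k = k + 2 + 1) := by clear hk hk₁ hk₂; revert k; decide
  exact hB.false_of_induced (c k) (c (k + 1)) f x (c (k + 2)) (hc.adj_s10 (Or.inl rfl)) hk₁.symm
    hfx (hc.adj_s10 (Or.inl hsucc)) hk₂ (fun h => hk h.symm) (fun h => hx k h.symm) (hc.not_adj_s10 hnot)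
    (fun h => hx _ h.symm) (hx _)

end

/-- The induced `G₇` of the statement, with its cycle `c₁, …, c₅` indexed as `c 0, …, c 4`. -/
structure IsG7 (G : SimpleGraph V) (c : Fin 5 → V) (d x : V) : Prop where
  cycle : IsInducedC5 G c
  adj_zero : G.Adj d (c 0)
  adj_three : G.Adj d (c 3)
  not_adj_of_ne : ∀ i, i ≠ 0 → i ≠ 3 → ¬ G.Adj d (c i)
  adj_pendant : G.Adj x d
  pendant_not_adj : ∀ i, ¬ G.Adj x (c i)

namespace IsG7

variable {G : SimpleGraph V} {c : Fin 5 → V} {d x f : V} {k : Fin 5}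

theorem not_adj_s10 {i : Fin 5} (hG : IsG7 G c d x) (h₀ : i ≠ 0 := by decide)
    (h₃ : i ≠ 3 := by decide) : ¬ G.Adj d (c i) :=
  hG.not_adj_of_ne i h₀ h₃

theorem not_adj_pendant (hG : IsG7 G c d x) (hB : BullFree G)
    (hf : ∀ i, G.Adj f (c i) ↔ i ≠ k) : ¬ G.Adj f x :=
  hB.not_adj_of_forall_not_adj_cycle hG.cycle hG.pendant_not_adj (k := k)
    (fun h => (hf k).1 h rfl) ((hf _).2 (by simp)) ((hf _).2 (by simp))

theorem not_adj_center (hG : IsG7 G c d x) (hB : BullFree G)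
    (hf : ∀ i, G.Adj f (c i) ↔ i ≠ k) : ¬ G.Adj f d := by
  intro hfd
  have hx := hG.pendant_not_adj
  have hxf : ¬ G.Adj x f := fun h => hG.not_adj_pendant hB hf h.symm
  by_cases h₁₃ : G.Adj f (c 1) ∧ G.Adj f (c 3)
  · exact hB.false_of_induced x d f (c 1) (c 3) hG.adj_pendant hfd.symm h₁₃.1 hG.adj_three
      h₁₃.2 hxf (hx 1) (hx 3) hG.not_adj_s10 hG.cycle.not_adj_s10
  · have hk : k ≠ 0 ∧ k ≠ 2 := by
      constructor <;> rintro rfl <;> exact h₁₃ ⟨(hf 1).2 (by decide), (hf 3).2 (by decide)⟩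
    exact hB.false_of_induced x d f (c 2) (c 0) hG.adj_pendant hfd.symm ((hf 2).2 hk.2.symm)
      hG.adj_zero ((hf 0).2 hk.1.symm) hxf (hx 2) (hx 0) hG.not_adj_s10 hG.cycle.not_adj_s10

theorem eq_four (hG : IsG7 G c d x) (hB : BullFree G) (hP : P6Free G)
    (hf : ∀ i, G.Adj f (c i) ↔ i ≠ k) : k = 4 := by
  have hx := hG.pendant_not_adj
  have hc := hG.cycle
  have hfx : ¬ G.Adj x f := fun h => hG.not_adj_pendant hB hf h.symm
  have hfd : ¬ G.Adj d f := fun h => hG.not_adj_center hB hf h.symm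
  have hfk : ¬ G.Adj (c k) f := fun h => (hf k).1 h.symm rfl
  have adj_s10 (i : Fin 5) (hi : i ≠ k) : G.Adj f (c i) := (hf i).2 hi
  fin_cases k
  · exact hP.false_of_induced x d (c 0) (c 4) f (c 2) hG.adj_pendant hG.adj_zero hc.adj_s10
      (adj_s10 4 (by decide)).symm (adj_s10 2 (by decide)) (hx 0) (hx 4) hfx (hx 2) hG.not_adj_s10 hfd
      hG.not_adj_s10 hfk hc.not_adj_s10 hc.not_adj_s10 |>.elim
  · exact hB.false_of_induced d (c 0) f (c 2) (c 4) hG.adj_zero (adj_s10 0 (by decide)).symm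
      (adj_s10 2 (by decide)) hc.adj_s10 (adj_s10 4 (by decide)) hfd hG.not_adj_s10 hG.not_adj_s10 hc.not_adj_s10
      hc.not_adj_s10 |>.elim
  · exact hB.false_of_induced d (c 3) f (c 1) (c 4) hG.adj_three (adj_s10 3 (by decide)).symm
      (adj_s10 1 (by decide)) hc.adj_s10 (adj_s10 4 (by decide)) hfd hG.not_adj_s10 hG.not_adj_s10 hc.not_adj_s10
      hc.not_adj_s10 |>.elim
  · exact hP.false_of_induced x d (c 3) (c 4) f (c 1) hG.adj_pendant hG.adj_three hc.adj_s10
      (adj_s10 4 (by decide)).symm (adj_s10 1 (by decide)) (hx 3) (hx 4) hfx (hx 1) hG.not_adj_s10 hfd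
      hG.not_adj_s10 hfk hc.not_adj_s10 hc.not_adj_s10 |>.elim
  · rfl

end IsG7

theorem stmt10_general (G : SimpleGraph V) [DecidableRel G.Adj]
    (hP : P6Free G) (hB : BullFree G)
    (c : Fin 5 → V) (hc : IsInducedC5 G c)
    (d : V)
    (hd0 : G.Adj d (c 0)) (hd3 : G.Adj d (c 3))
    (hdno : ∀ i : Fin 5, i ≠ 0 → i ≠ 3 → ¬ G.Adj d (c i))
    (x : V) (hxd : G.Adj x d)
    (hx0 : ∀ i : Fin 5, ¬ G.Adj x (c i)) :
    ∀ f : V, f ∉ Set.range c → nbrCount G c f = 4 →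
      (∀ i : Fin 5, i ≠ 4 → G.Adj f (c i)) ∧
      ¬ G.Adj f (c 4) ∧ ¬ G.Adj f d ∧ ¬ G.Adj f x := by
  intro f _ hf
  have hG : IsG7 G c d x := ⟨hc, hd0, hd3, hdno, hxd, hx0⟩
  obtain ⟨k, hk⟩ := exists_forall_adj_iff_ne_of_nbrCount_eq_four hf
  obtain rfl := hG.eq_four hB hP hk
  exact ⟨fun i => (hk i).2, fun h => (hk 4).1 h rfl, hG.not_adj_center hB hk,
    hG.not_adj_pendant hB hk⟩

theorem stmt10 (G : SimpleGraph V) [DecidableRel G.Adj]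
    (hP : P6Free G) (hB : BullFree G) (hPr : IsPrimeGraph G)
    (c : Fin 5 → V) (hc : IsInducedC5 G c)
    (d : V) (hd : d ∉ Set.range c)
    (hd0 : G.Adj d (c 0)) (hd3 : G.Adj d (c 3))
    (hdno : ∀ i : Fin 5, i ≠ 0 → i ≠ 3 → ¬ G.Adj d (c i))
    (x : V) (hx : x ∉ Set.range c) (hxd : G.Adj x d) (hxne : x ≠ d)
    (hx0 : ∀ i : Fin 5, ¬ G.Adj x (c i)) :
    ∀ f : V, f ∉ Set.range c → nbrCount G c f = 4 →
      (∀ i : Fin 5, i ≠ 4 → G.Adj f (c i)) ∧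
      ¬ G.Adj f (c 4) ∧ ¬ G.Adj f d ∧ ¬ G.Adj f x :=
  stmt10_general G hP hB c hc d hd0 hd3 hdno x hxd hx0
end
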